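/- Let Ext: {0,1}^n × {0,1}^n → {0,1}^m be a two-source extractor for min-entropy k₀ with error ε. Let k, k₁, k₂ be reals satisfying k > k₁ + k₂ and k₁ > k₀. Let X and Y be independent distributions on {0,1}^n, and define L = {(x, y) ∈ {0,1}^n × {0,1}^n : Pr[(X, Y) = (x, y)] ≤ 2^{−k}}. Then for every z ∈ {0,1}^m, Pr[(X, Y) ∈ L and Ext(X, Y) = z] ≤ 2^{−(k₂ − n − 1)} + max(2^{−m} + ε, 2^{−(k₁ − k₀)}). -/

import Mathlib

open Finset

/-- The uniform distribution on a finite type. -/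
noncomputable def unif (α : Type*) [Fintype α] : α → ℝ := fun _ => (Fintype.card α : ℝ)⁻¹

/-- `p` is a probability distribution on the finite type `α`. -/
def IsDist {α : Type*} [Fintype α] (p : α → ℝ) : Prop :=
  (∀ a, 0 ≤ p a) ∧ ∑ a, p a = 1

open scoped Classical in
/-- Probability that a sample from `p` lands in the event `E`. -/
noncomputable def prob {α : Type*} [Fintype α] (p : α → ℝ) (E : Set α) : ℝ :=
  ∑ a, if a ∈ E then p a else 0

/-- Total variation distance between two distributions on a finite type. -/
noncomputable def tv {α : Type*} [Fintype α] (p q : α → ℝ) : ℝ :=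
  (∑ a, |p a - q a|) / 2

open scoped Classical in
/-- Pushforward of the distribution `p` under the map `f`. -/
noncomputable def push {α β : Type*} [Fintype α] (f : α → β) (p : α → ℝ) : β → ℝ :=
  fun b => ∑ a, if f a = b then p a else 0

/-- `H∞(p) ≥ k`, i.e. every point has mass at most `2 ^ (-k)`. -/
def MinEntropyGE {α : Type*} (p : α → ℝ) (k : ℝ) : Prop :=
  ∀ a, p a ≤ (2 : ℝ) ^ (-k)

/-- `(a, b, k)`-isolator for the class `𝒳` of distributions on the finite type `α`:
`Iso` outputs `1` with probability at least `a` on the uniform distribution, and for every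
`X ∈ 𝒳`, the probability that a sample of `X` is a light point (mass at most `2^(-k)`)
on which `Iso` outputs `1` is at most `b`. -/
def IsIsolator {α : Type*} [Fintype α] (𝒳 : Set (α → ℝ)) (Iso : α → Bool)
    (a b k : ℝ) : Prop :=
  a ≤ prob (unif α) {x | Iso x = true} ∧
  ∀ X ∈ 𝒳, prob X {x | X x ≤ (2 : ℝ) ^ (-k) ∧ Iso x = true} ≤ b

/-- `(ε, k)`-extractor (outputting `m` bits) for the class `𝒳`. -/
def IsExtractor {α : Type*} [Fintype α] {m : ℕ} (𝒳 : Set (α → ℝ))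
    (Ext : α → Fin m → Bool) (ε k : ℝ) : Prop :=
  ∀ X ∈ 𝒳, MinEntropyGE X k → tv (push Ext X) (unif (Fin m → Bool)) ≤ ε

/-- Two-source extractor for min-entropy `k₀` in each source, with error `ε`. -/
def IsTwoSourceExtractor {n m : ℕ}
    (Ext : ((Fin n → Bool) × (Fin n → Bool)) → Fin m → Bool) (k₀ ε : ℝ) : Prop :=
  ∀ X Y : (Fin n → Bool) → ℝ, IsDist X → IsDist Y →
    MinEntropyGE X k₀ → MinEntropyGE Y k₀ →
    tv (push Ext (fun p => X p.1 * Y p.2)) (unif (Fin m → Bool)) ≤ ε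

/-!
A light pair `(x, y)`, with `X x * Y y ≤ 2^(-k)`, either has both coordinates of mass at most
`2^(-k₁)`, or one coordinate of mass at most `2^(k₁ - k)`. Pairs of the second kind carry total
mass at most `2 · 2^n · 2^(k₁ - k) ≤ 2^(n - k₂ + 1)`. For pairs of the first kind, condition
`X` and `Y` on their light parts `A` and `B`: if either part has mass at most `2^(k₀ - k₁)` the
bound is immediate; otherwise both conditioned sources have min-entropy `k₀`, so the extractor
hits `z` with probability at most `2^(-m) + ε` on them, and unconditioning only scales this down.
-/

open scoped Classical in
noncomputable def condDist {α : Type*} [Fintype α] (p : α → ℝ) (S : Set α) : α → ℝ :=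
  fun a => if a ∈ S then p a / prob p S else 0

def prodDist {α β : Type*} (p : α → ℝ) (q : β → ℝ) : α × β → ℝ := fun x => p x.1 * q x.2

section Prob

variable {α β : Type*} [Fintype α]

lemma prob_nonneg {p : α → ℝ} (hp : ∀ a, 0 ≤ p a) (E : Set α) : 0 ≤ prob p E :=
  Finset.sum_nonneg fun a _ => by split_ifs <;> simp [hp a]

lemma prob_mono {p : α → ℝ} (hp : ∀ a, 0 ≤ p a) {E F : Set α} (h : E ⊆ F) :
    prob p E ≤ prob p F :=
  Finset.sum_le_sum fun a _ => by
    by_cases hE : a ∈ E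
    · simp [hE, h hE]
    · split_ifs <;> simp [hp a]

lemma prob_union_le {p : α → ℝ} (hp : ∀ a, 0 ≤ p a) (E F : Set α) :
    prob p (E ∪ F) ≤ prob p E + prob p F := by
  rw [prob, prob, prob, ← Finset.sum_add_distrib]
  refine Finset.sum_le_sum fun a _ => ?_
  by_cases hE : a ∈ E <;> by_cases hF : a ∈ F <;> simp [hE, hF, hp a]

lemma prob_univ (p : α → ℝ) : prob p Set.univ = ∑ a, p a := by
  simp [prob]

lemma prob_le_one {p : α → ℝ} (hp : IsDist p) (E : Set α) : prob p E ≤ 1 :=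
  hp.2 ▸ prob_univ p ▸ prob_mono hp.1 (Set.subset_univ E)

lemma prob_setOf_le_le {p : α → ℝ} {c : ℝ} (hc : 0 ≤ c) :
    prob p {a | p a ≤ c} ≤ Fintype.card α * c := by
  calc prob p {a | p a ≤ c} ≤ ∑ _a : α, c :=
        Finset.sum_le_sum fun a _ => by split_ifs with h <;> simp_all
    _ = Fintype.card α * c := by simp

lemma push_eq_prob (f : α → β) (p : α → ℝ) (b : β) : push f p b = prob p (f ⁻¹' {b}) := by
  refine Finset.sum_congr rfl fun a _ => ?_
  by_cases h : f a = b <;> simp [h]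

lemma sum_push [Fintype β] (f : α → β) (p : α → ℝ) : ∑ b, push f p b = ∑ a, p a := by
  simp only [push]
  rw [Finset.sum_comm]
  refine Finset.sum_congr rfl fun a _ => ?_
  rw [Fintype.sum_eq_single (f a) fun b hb => if_neg (Ne.symm hb)]
  exact if_pos rfl

lemma prob_condDist (p : α → ℝ) (S E : Set α) :
    prob (condDist p S) E = prob p (S ∩ E) / prob p S := by
  simp only [prob, condDist, Finset.sum_div]
  refine Finset.sum_congr rfl fun a _ => ?_
  by_cases hS : a ∈ S <;> by_cases hE : a ∈ E <;> simp [hS, hE]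

lemma isDist_condDist {p : α → ℝ} (hp : ∀ a, 0 ≤ p a) {S : Set α} (hS : 0 < prob p S) :
    IsDist (condDist p S) := by
  refine ⟨fun a => ?_, ?_⟩
  · simp only [condDist]
    split_ifs
    exacts [div_nonneg (hp a) hS.le, le_rfl]
  · rw [← prob_univ, prob_condDist, Set.inter_univ, div_self hS.ne']

lemma minEntropyGE_condDist {p : α → ℝ} {S : Set α} {s t : ℝ}
    (hpS : ∀ a ∈ S, p a ≤ 2 ^ (-t)) (hS : 2 ^ (-(t - s)) < prob p S) :
    MinEntropyGE (condDist p S) s := by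
  have hpos : (0 : ℝ) < 2 ^ (-(t - s)) := by positivity
  intro a
  simp only [condDist]
  split_ifs with ha
  · calc p a / prob p S ≤ 2 ^ (-t) / 2 ^ (-(t - s)) :=
          div_le_div₀ (by positivity) (hpS a ha) hpos hS.le
      _ = 2 ^ (-s) := by rw [← Real.rpow_sub two_pos]; ring_nf
  · positivity

lemma prob_prodDist_prod [Fintype β] (p : α → ℝ) (q : β → ℝ) (A : Set α) (B : Set β) :
    prob (prodDist p q) (A ×ˢ B) = prob p A * prob q B := by
  simp only [prob, prodDist, Finset.sum_mul_sum, ← Finset.univ_product_univ, Finset.sum_product]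
  refine Finset.sum_congr rfl fun a _ => Finset.sum_congr rfl fun b _ => ?_
  by_cases hA : a ∈ A <;> by_cases hB : b ∈ B <;> simp [hA, hB]

lemma prodDist_condDist [Fintype β] (p : α → ℝ) (q : β → ℝ) (A : Set α) (B : Set β) :
    prodDist (condDist p A) (condDist q B) = condDist (prodDist p q) (A ×ˢ B) := by
  funext x
  simp only [prodDist, condDist, prob_prodDist_prod, Set.mem_prod]
  by_cases hA : x.1 ∈ A <;> by_cases hB : x.2 ∈ B <;> simp [hA, hB, div_mul_div_comm]

end Prob

lemma le_add_tv {β : Type*} [Fintype β] {P Q : β → ℝ} (h : ∑ b, P b = ∑ b, Q b) (z : β) :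
    P z ≤ Q z + tv P Q := by
  have hsum : ∑ b, (|P b - Q b| + (P b - Q b)) = 2 * tv P Q := by
    rw [Finset.sum_add_distrib, Finset.sum_sub_distrib, h, tv]
    ring
  have hz : |P z - Q z| + (P z - Q z) ≤ ∑ b, (|P b - Q b| + (P b - Q b)) :=
    Finset.single_le_sum (f := fun b => |P b - Q b| + (P b - Q b)) (fun b _ => by linarith [neg_abs_le (P b - Q b)]) (Finset.mem_univ z)
  linarith [le_abs_self (P z - Q z)]

lemma unif_boolVec (m : ℕ) (b : Fin m → Bool) : unif (Fin m → Bool) b = 2 ^ (-(m : ℝ)) := by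
  simp [unif, Real.rpow_neg, Real.rpow_natCast]

lemma sum_unif (α : Type*) [Fintype α] [Nonempty α] : ∑ a, unif α a = 1 := by
  simp [unif]

lemma IsDist.prodDist {α β : Type*} [Fintype α] [Fintype β] {p : α → ℝ} {q : β → ℝ}
    (hp : IsDist p) (hq : IsDist q) : IsDist (prodDist p q) := by
  refine ⟨fun x => mul_nonneg (hp.1 _) (hq.1 _), ?_⟩
  rw [← prob_univ, ← Set.univ_prod_univ, prob_prodDist_prod, prob_univ, prob_univ, hp.2, hq.2,
    one_mul]

lemma IsTwoSourceExtractor.prob_prod_inter_preimage_le {n m : ℕ}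
    {Ext : ((Fin n → Bool) × (Fin n → Bool)) → Fin m → Bool} {k₀ ε : ℝ}
    (hExt : IsTwoSourceExtractor Ext k₀ ε) {X Y : (Fin n → Bool) → ℝ} (hX : IsDist X)
    (hY : IsDist Y) {t : ℝ} {A B : Set (Fin n → Bool)} (hA : ∀ x ∈ A, X x ≤ 2 ^ (-t))
    (hB : ∀ y ∈ B, Y y ≤ 2 ^ (-t)) (z : Fin m → Bool) :
    prob (prodDist X Y) (A ×ˢ B ∩ Ext ⁻¹' {z}) ≤ max (2 ^ (-(m : ℝ)) + ε) (2 ^ (-(t - k₀))) := by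
  have hW := hX.prodDist hY
  by_cases hXA : prob X A ≤ 2 ^ (-(t - k₀))
  · calc prob (prodDist X Y) (A ×ˢ B ∩ Ext ⁻¹' {z}) ≤ prob (prodDist X Y) (A ×ˢ Set.univ) :=
          prob_mono hW.1 (Set.inter_subset_left.trans (Set.prod_mono le_rfl (Set.subset_univ B)))
      _ = prob X A := by rw [prob_prodDist_prod, prob_univ, hY.2, mul_one]
      _ ≤ _ := le_max_of_le_right hXA
  by_cases hYB : prob Y B ≤ 2 ^ (-(t - k₀))
  · calc prob (prodDist X Y) (A ×ˢ B ∩ Ext ⁻¹' {z}) ≤ prob (prodDist X Y) (Set.univ ×ˢ B) :=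
          prob_mono hW.1 (Set.inter_subset_left.trans (Set.prod_mono (Set.subset_univ A) le_rfl))
      _ = prob Y B := by rw [prob_prodDist_prod, prob_univ, hX.2, one_mul]
      _ ≤ _ := le_max_of_le_right hYB
  push Not at hXA hYB
  have hXA₀ : 0 < prob X A := lt_trans (by positivity) hXA
  have hYB₀ : 0 < prob Y B := lt_trans (by positivity) hYB
  set X' := condDist X A
  set Y' := condDist Y B
  have hX' : IsDist X' := isDist_condDist hX.1 hXA₀
  have hY' : IsDist Y' := isDist_condDist hY.1 hYB₀
  have hpush : push Ext (prodDist X' Y') z ≤ 2 ^ (-(m : ℝ)) + ε := by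
    have htv := hExt X' Y' hX' hY' (minEntropyGE_condDist hA hXA) (minEntropyGE_condDist hB hYB)
    have hsum : ∑ b, push Ext (prodDist X' Y') b = ∑ b, unif (Fin m → Bool) b := by
      rw [sum_push, (hX'.prodDist hY').2, sum_unif]
    calc push Ext (prodDist X' Y') z
        ≤ unif (Fin m → Bool) z + tv (push Ext (prodDist X' Y')) (unif (Fin m → Bool)) :=
          le_add_tv hsum z
      _ ≤ 2 ^ (-(m : ℝ)) + ε := by rw [unif_boolVec]; exact (add_le_add_iff_left _).2 htv
  have hAB : 0 < prob (prodDist X Y) (A ×ˢ B) := by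
    rw [prob_prodDist_prod]; exact mul_pos hXA₀ hYB₀
  calc prob (prodDist X Y) (A ×ˢ B ∩ Ext ⁻¹' {z})
      ≤ prob (prodDist X Y) (A ×ˢ B ∩ Ext ⁻¹' {z}) / prob (prodDist X Y) (A ×ˢ B) :=
        le_div_self (prob_nonneg hW.1 _) hAB (prob_le_one hW _)
    _ = push Ext (prodDist X' Y') z := by rw [prodDist_condDist, push_eq_prob, prob_condDist]
    _ ≤ _ := hpush.trans (le_max_left _ _)

lemma light_mul_cases {a b k t : ℝ} (h : a * b ≤ 2 ^ (-k)) :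
    (a ≤ 2 ^ (-t) ∧ b ≤ 2 ^ (-t)) ∨ a ≤ 2 ^ (t - k) ∨ b ≤ 2 ^ (t - k) := by
  have hmul_gt : ∀ {u v : ℝ}, 2 ^ (-t) < u → 2 ^ (t - k) < v → 2 ^ (-k) < u * v := fun hu hv =>
    calc (2 : ℝ) ^ (-k) = 2 ^ (-t) * 2 ^ (t - k) := by rw [← Real.rpow_add two_pos]; ring_nf
      _ < _ := mul_lt_mul'' hu hv (by positivity) (by positivity)
  by_contra! ⟨hab, ha, hb⟩
  rcases le_or_gt a (2 ^ (-t)) with ha' | ha'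
  · exact (hmul_gt (hab ha') ha).not_ge (mul_comm a b ▸ h)
  · exact (hmul_gt ha' hb).not_ge h

lemma two_mul_two_pow_mul_rpow_le {k k₁ k₂ : ℝ} (hk : k₁ + k₂ < k) (n : ℕ) :
    2 * ((2 : ℝ) ^ n * 2 ^ (k₁ - k)) ≤ 2 ^ (-(k₂ - n - 1)) :=
  calc 2 * ((2 : ℝ) ^ n * 2 ^ (k₁ - k)) = 2 ^ (1 + n + (k₁ - k)) := by
        rw [Real.rpow_add two_pos, Real.rpow_add two_pos, Real.rpow_one, Real.rpow_natCast]; ring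
    _ ≤ 2 ^ (-(k₂ - n - 1)) := Real.rpow_le_rpow_of_exponent_le one_le_two (by linarith)

theorem stmt13_general (n m : ℕ)
    (Ext : ((Fin n → Bool) × (Fin n → Bool)) → Fin m → Bool)
    (k₀ ε : ℝ) (hExt : IsTwoSourceExtractor Ext k₀ ε)
    (k k₁ k₂ : ℝ) (hk : k₁ + k₂ < k)
    (X Y : (Fin n → Bool) → ℝ) (hX : IsDist X) (hY : IsDist Y)
    (z : Fin m → Bool) :
    prob (fun p : (Fin n → Bool) × (Fin n → Bool) => X p.1 * Y p.2)
        {p | X p.1 * Y p.2 ≤ (2 : ℝ) ^ (-k) ∧ Ext p = z}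
      ≤ (2 : ℝ) ^ (-(k₂ - (n : ℝ) - 1)) +
        max ((2 : ℝ) ^ (-(m : ℝ)) + ε) ((2 : ℝ) ^ (-(k₁ - k₀))) := by
  change prob (prodDist X Y) _ ≤ _
  have hW := (hX.prodDist hY).1
  set c : ℝ := 2 ^ (k₁ - k)
  set flat := {x | X x ≤ (2 : ℝ) ^ (-k₁)} ×ˢ {y | Y y ≤ (2 : ℝ) ^ (-k₁)} ∩ Ext ⁻¹' {z}
  set lopsided := {x | X x ≤ c} ×ˢ Set.univ ∪ Set.univ ×ˢ {y | Y y ≤ c}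
  have hcover : {p | X p.1 * Y p.2 ≤ (2 : ℝ) ^ (-k) ∧ Ext p = z} ⊆ flat ∪ lopsided := by
    rintro p ⟨hlight, hz⟩
    rcases light_mul_cases (t := k₁) hlight with h | h | h
    exacts [Or.inl ⟨h, hz⟩, Or.inr (Or.inl ⟨h, trivial⟩), Or.inr (Or.inr ⟨trivial, h⟩)]
  have hlopsided : prob (prodDist X Y) lopsided ≤ 2 ^ (-(k₂ - n - 1)) := by
    have hcard : (Fintype.card (Fin n → Bool) : ℝ) = 2 ^ n := by simp
    have hc : 0 ≤ c := by positivity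
    calc prob (prodDist X Y) lopsided
        ≤ prob (prodDist X Y) ({x | X x ≤ c} ×ˢ Set.univ)
          + prob (prodDist X Y) (Set.univ ×ˢ {y | Y y ≤ c}) := prob_union_le hW _ _
      _ = prob X {x | X x ≤ c} + prob Y {y | Y y ≤ c} := by
          rw [prob_prodDist_prod, prob_prodDist_prod, prob_univ, prob_univ, hX.2, hY.2, mul_one,
            one_mul]
      _ ≤ 2 ^ n * c + 2 ^ n * c := by
          rw [← hcard]; exact add_le_add (prob_setOf_le_le hc) (prob_setOf_le_le hc)
      _ = 2 * (2 ^ n * c) := by ring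
      _ ≤ _ := two_mul_two_pow_mul_rpow_le hk n
  calc prob (prodDist X Y) _ ≤ prob (prodDist X Y) flat + prob (prodDist X Y) lopsided :=
        (prob_mono hW hcover).trans (prob_union_le hW _ _)
    _ ≤ _ := by
        rw [add_comm]
        exact add_le_add hlopsided
          (hExt.prob_prod_inter_preimage_le hX hY (fun _ hx => hx) (fun _ hy => hy) z)

theorem stmt13 (n m : ℕ)
    (Ext : ((Fin n → Bool) × (Fin n → Bool)) → Fin m → Bool)
    (k₀ ε : ℝ) (hExt : IsTwoSourceExtractor Ext k₀ ε)
    (k k₁ k₂ : ℝ) (hk : k₁ + k₂ < k) (hk₁ : k₀ < k₁)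
    (X Y : (Fin n → Bool) → ℝ) (hX : IsDist X) (hY : IsDist Y)
    (z : Fin m → Bool) :
    prob (fun p : (Fin n → Bool) × (Fin n → Bool) => X p.1 * Y p.2)
        {p | X p.1 * Y p.2 ≤ (2 : ℝ) ^ (-k) ∧ Ext p = z}
      ≤ (2 : ℝ) ^ (-(k₂ - (n : ℝ) - 1)) +
        max ((2 : ℝ) ^ (-(m : ℝ)) + ε) ((2 : ℝ) ^ (-(k₁ - k₀))) :=
  stmt13_general n m Ext k₀ ε hExt k k₁ k₂ hk X Y hX hY z
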